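/- arXiv:2402.14485 — 7 statements merged into one kernel-verified Lean document; each statement's English description precedes it below -/
import Mathlib

section
/- Let Q be a finite acyclic quiver that is topologically sorted in reverse order, let Q_1, …, Q_k be subquivers of Q, let l be the union over i of the sets of bipaths of the quivers induced by the Q_i (viewed as bipaths of Q), and let cl_Q(l) be the smallest path relation of Q containing l. If for every pair of vertices (u, v) of Q the multigraph G_{u,v} is connected, then cl_Q(l) = BP_Q, i.e., cl_Q(l) relates every pair of paths of Q with the same source and the same target. -/
/-- A finite quiver: a number `n` of vertices (the vertex set being `{0, …, n-1}`)
together with a finite list of arcs, each arc a pair (source, target). -/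
structure Quiv where
  nbVertex : ℕ
  arcs : List (ℕ × ℕ)

/-- Well-formedness: all sources and targets are below the number of vertices. -/
def Quiv.Wellformed (Q : Quiv) : Prop :=
  ∀ a ∈ Q.arcs, a.1 < Q.nbVertex ∧ a.2 < Q.nbVertex

/-- A path from `u` to `v` in `Q` is a list of indices into `Q.arcs` selecting a chain
of consecutive arcs starting at `u` and ending at `v`. -/
inductive Quiv.IsPath (Q : Quiv) : ℕ → List ℕ → ℕ → Prop
  | nil (u : ℕ) : Quiv.IsPath Q u [] u
  | cons {u v w i : ℕ} {p : List ℕ} :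
      Q.arcs[i]? = some (u, v) → Quiv.IsPath Q v p w → Quiv.IsPath Q u (i :: p) w

/-- Acyclicity: there is no nonempty path from a vertex to itself
(equivalently, every path visits pairwise distinct vertices). -/
def Quiv.Acyclic (Q : Quiv) : Prop :=
  ∀ (u : ℕ) (p : List ℕ), p ≠ [] → ¬ Q.IsPath u p u

/-- `Q` is topologically sorted in reverse order: every arc `(s, t)` satisfies `s > t`. -/
def Quiv.TopSortedRev (Q : Quiv) : Prop :=
  ∀ a ∈ Q.arcs, a.2 < a.1

/-- A set of bipaths (pairs of paths with the same source and target), as a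
quadruple relation: source, target, first path, second path. -/
abbrev BipathSet := ℕ → ℕ → List ℕ → List ℕ → Prop

/-- The smallest path relation containing `l`: the closure of `l` under reflexivity,
symmetry, transitivity, and concatenation of paths. -/
inductive PathRelClosure (l : BipathSet) : ℕ → ℕ → List ℕ → List ℕ → Prop
  | base {u v : ℕ} {p q : List ℕ} : l u v p q → PathRelClosure l u v p q
  | refl (u v : ℕ) (p : List ℕ) : PathRelClosure l u v p p
  | symm {u v : ℕ} {p q : List ℕ} :
      PathRelClosure l u v p q → PathRelClosure l u v q p
  | trans {u v : ℕ} {p q r : List ℕ} :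
      PathRelClosure l u v p q → PathRelClosure l u v q r → PathRelClosure l u v p r
  | comp {u v w : ℕ} {p p' q q' : List ℕ} :
      PathRelClosure l u v p p' → PathRelClosure l v w q q' →
      PathRelClosure l u w (p ++ q) (p' ++ q')

/-- A subquiver: a selection of vertex labels and of arc indices. -/
structure Subquiv where
  vertices : List ℕ
  arcs : List ℕ

/-- Well-formedness of a subquiver of `Q`. -/
def Subquiv.Wf (S : Subquiv) (Q : Quiv) : Prop :=
  (∀ i ∈ S.arcs, i < Q.arcs.length) ∧ S.vertices.Nodup ∧
  (∀ x ∈ S.vertices, x < Q.nbVertex) ∧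
  (∀ i ∈ S.arcs, ∀ a, Q.arcs[i]? = some a → a.1 ∈ S.vertices ∧ a.2 ∈ S.vertices)

/-- A path of the quiver induced by the subquiver `S` of `Q`, viewed as a path of `Q`:
a path of `Q` whose endpoints are selected vertices of `S` and whose arcs are all
selected arcs of `S`. -/
def Subquiv.PathIn (S : Subquiv) (Q : Quiv) (u : ℕ) (p : List ℕ) (v : ℕ) : Prop :=
  Q.IsPath u p v ∧ u ∈ S.vertices ∧ v ∈ S.vertices ∧ ∀ i ∈ p, i ∈ S.arcs

/-- The union over the subquivers in `Qs` of the sets of bipaths of the induced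
quivers, viewed as bipaths of `Q`. -/
def subBipaths (Q : Quiv) (Qs : List Subquiv) : BipathSet := fun u v p q =>
  ∃ S ∈ Qs, S.PathIn Q u p v ∧ S.PathIn Q u q v

/-- Arcs adjacent to `u` starting a path from `u` to `v` in `Q`. -/
def ArcsFrom (Q : Quiv) (u v : ℕ) : Set ℕ := {e | ∃ p, Q.IsPath u (e :: p) v}

/-- Arcs adjacent to `v` ending a path from `u` to `v` in `Q`. -/
def ArcsTo (Q : Quiv) (v u : ℕ) : Set ℕ := {e | ∃ p, Q.IsPath u (p ++ [e]) v}

/-- `E_{u,v} = Arcs_from(u,v) ∪ Arcs_to(v,u)`. -/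
def ESet (Q : Quiv) (u v : ℕ) : Set ℕ := ArcsFrom Q u v ∪ ArcsTo Q v u

/-- The edge relation of the multigraph `G_{u,v}` on `E_{u,v}`: `e1` and `e2` are
related when either some path of `Q` from `u` to `v` contains both, or some subquiver
in `Qs` contains two paths from `u` to `v` containing respectively `e1` and `e2`. -/
def GEdge (Q : Quiv) (Qs : List Subquiv) (u v : ℕ) (e1 e2 : ℕ) : Prop :=
  e1 ∈ ESet Q u v ∧ e2 ∈ ESet Q u v ∧
  ((∃ p, Q.IsPath u p v ∧ e1 ∈ p ∧ e2 ∈ p) ∨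
   (∃ S ∈ Qs, ∃ p1 p2, S.PathIn Q u p1 v ∧ S.PathIn Q u p2 v ∧ e1 ∈ p1 ∧ e2 ∈ p2))

/-- Connectedness of the multigraph `G_{u,v}`: any two vertices of `G_{u,v}`
(i.e. elements of `E_{u,v}`) are joined by a path of edges. -/
def GConnected (Q : Quiv) (Qs : List Subquiv) (u v : ℕ) : Prop :=
  ∀ e1 ∈ ESet Q u v, ∀ e2 ∈ ESet Q u v, Relation.ReflTransGen (GEdge Q Qs u v) e1 e2

/-- Fullness of the relation `R_{u,v}` (w.r.t. the closure of the bipath set `l`):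
for all `e1, e2 ∈ E_{u,v}`, every path from `u` to `v` containing `e1` is related
to every path from `u` to `v` containing `e2`. -/
def RFull (Q : Quiv) (l : BipathSet) (u v : ℕ) : Prop :=
  ∀ e1 ∈ ESet Q u v, ∀ e2 ∈ ESet Q u v,
    ∀ p1 p2, Q.IsPath u p1 v → e1 ∈ p1 → Q.IsPath u p2 v → e2 ∈ p2 →
      PathRelClosure l u v p1 p2

/-! Strong induction on the span `u - v`, which the reverse topological order makes
decrease along arcs. Two paths sharing an arc `e : a → b` factor as `r ++ e :: s`, where
`r` and `s` have smaller span and are therefore related by induction; congruence then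
relates the two paths. Connectivity of `G_{u,v}` links the first arcs of any two
nonempty paths from `u` to `v`: an edge of `G_{u,v}` comes either from one path containing
both arcs (a shared-arc step) or from a bipath of some `Q_i` (a generator of the
closure). -/

namespace Quiv

variable {Q : Quiv} {u v : ℕ} {p : List ℕ}

lemma IsPath.eq_of_nil (h : Q.IsPath u [] v) : u = v := by
  cases h; rfl

lemma IsPath.le (htop : Q.TopSortedRev) (h : Q.IsPath u p v) : v ≤ u := by
  induction h with
  | nil => exact le_rfl
  | cons harc _ ih => exact ih.trans (htop _ (List.mem_of_getElem? harc)).le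

lemma IsPath.lt (htop : Q.TopSortedRev) (h : Q.IsPath u p v) (hp : p ≠ []) : v < u := by
  cases h with
  | nil => exact absurd rfl hp
  | cons harc htail => exact (htail.le htop).trans_lt (htop _ (List.mem_of_getElem? harc))

lemma IsPath.lt_nbVertex (hwf : Q.Wellformed) (h : Q.IsPath u p v) (hp : p ≠ []) :
    u < Q.nbVertex ∧ v < Q.nbVertex := by
  induction h with
  | nil => exact absurd rfl hp
  | @cons _ _ _ _ p harc htail ih =>
    have hb := hwf _ (List.mem_of_getElem? harc)
    rcases p with _ | ⟨_, _⟩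
    · exact htail.eq_of_nil ▸ hb
    · exact ⟨hb.1, (ih (List.cons_ne_nil _ _)).2⟩

lemma IsPath.exists_eq_append_cons_of_mem {e : ℕ} (h : Q.IsPath u p v) (he : e ∈ p) :
    ∃ a b r s, Q.arcs[e]? = some (a, b) ∧ p = r ++ e :: s ∧
      Q.IsPath u r a ∧ Q.IsPath b s v := by
  induction h with
  | nil => simp at he
  | @cons u w _ i p harc htail ih =>
    rcases List.mem_cons.mp he with rfl | hmem
    · exact ⟨u, w, [], p, harc, rfl, .nil u, htail⟩
    · obtain ⟨a, b, r, s, hab, rfl, hr, hs⟩ := ih hmem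
      exact ⟨a, b, i :: r, s, hab, rfl, .cons harc hr, hs⟩

lemma lt_nbVertex_of_mem_eSet (hwf : Q.Wellformed) {e : ℕ} (he : e ∈ ESet Q u v) :
    u < Q.nbVertex ∧ v < Q.nbVertex := by
  rcases he with ⟨p, hp⟩ | ⟨p, hp⟩
  · exact hp.lt_nbVertex hwf (List.cons_ne_nil _ _)
  · exact hp.lt_nbVertex hwf (by simp)

end Quiv

def AllPathsRelated (Q : Quiv) (l : BipathSet) (u v : ℕ) : Prop :=
  ∀ p q, Q.IsPath u p v → Q.IsPath u q v → PathRelClosure l u v p q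

section

variable {Q : Quiv} {l : BipathSet} {u v : ℕ}

lemma PathRelClosure.append_cons {a b e : ℕ} {r₁ r₂ s₁ s₂ : List ℕ}
    (hr : PathRelClosure l u a r₁ r₂) (hs : PathRelClosure l b v s₁ s₂) :
    PathRelClosure l u v (r₁ ++ e :: s₁) (r₂ ++ e :: s₂) :=
  hr.comp ((PathRelClosure.refl a b [e]).comp hs)

lemma PathRelClosure.of_mem_of_mem (htop : Q.TopSortedRev)
    (ih : ∀ u' v', u' - v' < u - v → AllPathsRelated Q l u' v')
    {p q : List ℕ} {e : ℕ} (hp : Q.IsPath u p v) (hq : Q.IsPath u q v)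
    (hep : e ∈ p) (heq : e ∈ q) : PathRelClosure l u v p q := by
  obtain ⟨a, b, r₁, s₁, hab, rfl, hr₁, hs₁⟩ := hp.exists_eq_append_cons_of_mem hep
  obtain ⟨a', b', r₂, s₂, hab', rfl, hr₂, hs₂⟩ := hq.exists_eq_append_cons_of_mem heq
  obtain ⟨rfl, rfl⟩ : a = a' ∧ b = b' := by simpa [hab] using hab'
  have hba : b < a := htop _ (List.mem_of_getElem? hab)
  have hau := hr₁.le htop
  have hvb := hs₁.le htop
  exact .append_cons (ih u a (by omega) r₁ r₂ hr₁ hr₂) (ih b v (by omega) s₁ s₂ hs₁ hs₂)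

lemma allPathsRelated_of_rFull (htop : Q.TopSortedRev) (h : RFull Q l u v) :
    AllPathsRelated Q l u v := by
  rintro (_ | ⟨e₁, p⟩) (_ | ⟨e₂, q⟩) hp hq
  · exact .refl u v []
  · cases hp.eq_of_nil
    exact absurd (hq.lt htop (List.cons_ne_nil _ _)) (lt_irrefl u)
  · cases hq.eq_of_nil
    exact absurd (hp.lt htop (List.cons_ne_nil _ _)) (lt_irrefl u)
  · exact h e₁ (.inl ⟨p, hp⟩) e₂ (.inl ⟨q, hq⟩) _ _ hp List.mem_cons_self hq
      List.mem_cons_self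

lemma rFull_of_gConnected {Qs : List Subquiv}
    (hshare : ∀ p q e, Q.IsPath u p v → Q.IsPath u q v → e ∈ p → e ∈ q →
      PathRelClosure (subBipaths Q Qs) u v p q)
    (hG : GConnected Q Qs u v) : RFull Q (subBipaths Q Qs) u v := by
  intro e₁ he₁ e₂ he₂ p₁ p₂ hp₁ hm₁ hp₂ hm₂
  have hchain := hG e₁ he₁ e₂ he₂
  clear he₂
  induction hchain generalizing p₂ with
  | refl => exact hshare _ _ _ hp₁ hp₂ hm₁ hm₂
  | tail _ hedge ih =>
    obtain ⟨-, -, ⟨r, hr, hbr, hcr⟩ | ⟨S, hS, q₁, q₂, hq₁, hq₂, hbq, hcq⟩⟩ := hedge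
    · exact (ih r hr hbr).trans (hshare _ _ _ hr hp₂ hcr hm₂)
    · exact ((ih q₁ hq₁.1 hbq).trans (.base ⟨S, hS, hq₁, hq₂⟩)).trans
        (hshare _ _ _ hq₂.1 hp₂ hcq hm₂)

lemma gConnected_of_wellformed {Qs : List Subquiv} (hwf : Q.Wellformed)
    (hconn : ∀ u v, u < Q.nbVertex → v < Q.nbVertex → GConnected Q Qs u v) :
    GConnected Q Qs u v := fun e₁ he₁ =>
  have hb := Q.lt_nbVertex_of_mem_eSet hwf he₁
  hconn u v hb.1 hb.2 e₁ he₁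

end

theorem closure_full_of_all_GConnected_general (Q : Quiv) (Qs : List Subquiv)
    (hwf : Q.Wellformed)
    (htop : Q.TopSortedRev)
    (hconn : ∀ u v, u < Q.nbVertex → v < Q.nbVertex → GConnected Q Qs u v) :
    ∀ u v p q, Q.IsPath u p v → Q.IsPath u q v →
      PathRelClosure (subBipaths Q Qs) u v p q := by
  intro u v
  induction hn : u - v using Nat.strong_induction_on generalizing u v with
  | _ n ih =>
    have hsmaller : ∀ u' v', u' - v' < u - v → AllPathsRelated Q (subBipaths Q Qs) u' v' :=
      fun u' v' h => ih _ (hn ▸ h) u' v' rfl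
    refine allPathsRelated_of_rFull htop
      (rFull_of_gConnected ?_ (gConnected_of_wellformed hwf hconn))
    exact fun p q e hp hq hep heq => .of_mem_of_mem htop hsmaller hp hq hep heq

/-- Decision procedure correctness: if `G_{u,v}` is connected for every pair of
vertices `(u, v)` of `Q`, then `cl_Q(l)` relates every pair of paths of `Q` with the
same source and the same target, i.e. `cl_Q(l) = BP_Q`. -/
theorem closure_full_of_all_GConnected (Q : Quiv) (Qs : List Subquiv)
    (hwf : Q.Wellformed) (hsub : ∀ S ∈ Qs, S.Wf Q)
    (hacyc : Q.Acyclic) (htop : Q.TopSortedRev)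
    (hconn : ∀ u v, u < Q.nbVertex → v < Q.nbVertex → GConnected Q Qs u v) :
    ∀ u v p q, Q.IsPath u p v → Q.IsPath u q v →
      PathRelClosure (subBipaths Q Qs) u v p q :=
  closure_full_of_all_GConnected_general Q Qs hwf htop hconn
end

section
/- Let Q be a finite quiver with vertices [n], topologically sorted in reverse order (every arc goes from a larger-labeled vertex to a smaller one), let u_0 = n − 1, let a_0 be an arc of Q with source u_0 and target v_0, and let Q′ be the quiver obtained from Q by removing the arc a_0. Let l′ ⊆ BP_{Q′} be a set of bipaths of Q′ such that cl_{Q′}(l′) = BP_{Q′}. Let W̃ = acc(u_0) ∩ acc(v_0) be the set of vertices accessible in Q′ both from u_0 and from v_0, and let W = { w ∈ W̃ | for all w′ ∈ W̃ \ {w}, w ∉ acc(w′) }. For each w ∈ W choose a path p_w from u_0 to w in Q′ and a path q_w from v_0 to w in Q′, and set l = l′ ∪ { (p_w, a_0 ⋅ q_w) | w ∈ W }, where a_0 ⋅ q_w denotes the path a_0 followed by q_w. Then cl_Q(l) = BP_Q. -/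
/-- Reindexing of arc indices of `Q'` (obtained from `Q` by erasing the arc at index
`i0`) back into arc indices of `Q`. -/
def liftIdx (i0 j : ℕ) : ℕ := if j < i0 then j else j + 1

/- Since `u0 = n - 1` is the top vertex and arcs go downwards, no arc enters `u0`, so the arc
`a0` can only occur as the first arc of a path. Two paths of `Q` that both avoid `a0` or both
start with `a0` are therefore related through `cl_{Q'}(l')`. For a path `p : u0 → v` of `Q'`
and a path `a0 ⋅ q` with `q : v0 → v`, the vertex `v` lies in `W̃`, and the highest-labelled
vertex `w` of `W̃` reaching `v` (by some `r`) lies in `W`; then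
`p ~ p_w ⋅ r ~ a0 ⋅ q_w ⋅ r ~ a0 ⋅ q`. -/

def Quiv.eraseArc (Q : Quiv) (i : ℕ) : Quiv := ⟨Q.nbVertex, Q.arcs.eraseIdx i⟩

theorem Quiv.TopSortedRev.eraseArc {Q : Quiv} (htop : Q.TopSortedRev) (i : ℕ) :
    (Q.eraseArc i).TopSortedRev :=
  fun a ha => htop a (List.mem_of_mem_eraseIdx ha)

namespace Quiv.IsPath

variable {Q : Quiv} {u v w : ℕ} {p q : List ℕ}

theorem append (hp : Q.IsPath u p v) (hq : Q.IsPath v q w) : Q.IsPath u (p ++ q) w := by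
  induction hp with
  | nil => exact hq
  | cons ha _ ih => exact .cons ha (ih hq)

theorem target_le (htop : Q.TopSortedRev) (h : Q.IsPath u p v) : v ≤ u := by
  induction h with
  | nil => exact le_rfl
  | cons ha _ ih => exact ih.trans (htop _ (List.mem_of_getElem? ha)).le

theorem target_lt (htop : Q.TopSortedRev) (h : Q.IsPath u p v) (hp : p ≠ []) : v < u := by
  cases h with
  | nil => exact absurd rfl hp
  | cons ha hrest => exact (hrest.target_le htop).trans_lt (htop _ (List.mem_of_getElem? ha))

theorem source_le_of_mem (htop : Q.TopSortedRev) (h : Q.IsPath u p v) {i s t : ℕ}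
    (hi : Q.arcs[i]? = some (s, t)) (hmem : i ∈ p) : s ≤ u := by
  induction h with
  | nil => exact absurd hmem List.not_mem_nil
  | cons ha _ ih =>
    rcases List.mem_cons.1 hmem with rfl | hmem
    · rw [hi] at ha
      exact (Prod.ext_iff.1 (Option.some.inj ha)).1.le
    · exact (ih hmem).trans (htop _ (List.mem_of_getElem? ha)).le

theorem exists_eq_map_liftIdx {i0 : ℕ} (h : Q.IsPath u p v) (hp : i0 ∉ p) :
    ∃ p', (Q.eraseArc i0).IsPath u p' v ∧ p = p'.map (liftIdx i0) := by
  induction h with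
  | nil => exact ⟨[], .nil _, rfl⟩
  | @cons _ _ _ i _ ha _ ih =>
    obtain ⟨p', hp', rfl⟩ := ih (fun h => hp (List.mem_cons_of_mem _ h))
    have hne : i ≠ i0 := fun h => hp (h ▸ List.mem_cons_self)
    -- erasing index `i0` shifts the arcs above it down by one
    obtain ⟨j, hj, rfl⟩ : ∃ j, (Q.eraseArc i0).arcs[j]? = Q.arcs[i]? ∧ liftIdx i0 j = i := by
      by_cases hlt : i < i0
      · exact ⟨i, by simp [Quiv.eraseArc, List.getElem?_eraseIdx, hlt], by simp [liftIdx, hlt]⟩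
      · refine ⟨i - 1, ?_, ?_⟩
        · simp only [Quiv.eraseArc, List.getElem?_eraseIdx, if_neg (show ¬ i - 1 < i0 by omega)]
          congr 1
          omega
        · simp only [liftIdx, if_neg (show ¬ i - 1 < i0 by omega)]
          omega
    exact ⟨j :: p', .cons (hj.trans ha) hp', rfl⟩

theorem eq_cons_of_mem_of_source_top (hwf : Q.Wellformed) (htop : Q.TopSortedRev) {i0 v0 : ℕ}
    (ha0 : Q.arcs[i0]? = some (Q.nbVertex - 1, v0)) (h : Q.IsPath u p w) (hmem : i0 ∈ p) :
    u = Q.nbVertex - 1 ∧ ∃ p₁, p = i0 :: p₁ ∧ Q.IsPath v0 p₁ w ∧ i0 ∉ p₁ := by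
  cases h with
  | nil => exact absurd hmem List.not_mem_nil
  | @cons _ v' _ i p₁ ha hrest =>
    have hlt := htop _ (List.mem_of_getElem? ha)
    have hbound := (hwf _ (List.mem_of_getElem? ha)).1
    have hnot : i0 ∉ p₁ := fun h => by
      have := hrest.source_le_of_mem htop ha0 h
      omega
    obtain rfl : i0 = i := by simpa [hnot] using hmem
    obtain ⟨hu, rfl⟩ := Prod.mk.inj (Option.some.inj (ha.symm.trans ha0))
    exact ⟨hu, p₁, rfl, hrest, hnot⟩

theorem eq_map_liftIdx_or_eq_cons (hwf : Q.Wellformed) (htop : Q.TopSortedRev) {i0 v0 : ℕ}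
    (ha0 : Q.arcs[i0]? = some (Q.nbVertex - 1, v0)) (h : Q.IsPath u p w) :
    (∃ p', (Q.eraseArc i0).IsPath u p' w ∧ p = p'.map (liftIdx i0)) ∨
      u = Q.nbVertex - 1 ∧
        ∃ p', (Q.eraseArc i0).IsPath v0 p' w ∧ p = i0 :: p'.map (liftIdx i0) := by
  by_cases hmem : i0 ∈ p
  · obtain ⟨hu, p₁, rfl, hp₁, hnot⟩ := h.eq_cons_of_mem_of_source_top hwf htop ha0 hmem
    obtain ⟨p', hp', rfl⟩ := hp₁.exists_eq_map_liftIdx hnot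
    exact .inr ⟨hu, p', hp', rfl⟩
  · exact .inl (h.exists_eq_map_liftIdx hmem)

end Quiv.IsPath

theorem Quiv.exists_unreachable_reaching (Q : Quiv) (htop : Q.TopSortedRev) {S : Set ℕ}
    (hS : BddAbove S) {v : ℕ} (hv : v ∈ S) :
    ∃ w ∈ S, (∀ w' ∈ S, w' ≠ w → ¬ ∃ p, Q.IsPath w' p w) ∧ ∃ r, Q.IsPath w r v := by
  set T := {w ∈ S | ∃ r, Q.IsPath w r v}
  have hT : BddAbove T := hS.mono fun _ h => h.1
  obtain ⟨hwS, r, hr⟩ : sSup T ∈ T := Nat.sSup_mem ⟨v, hv, [], .nil v⟩ hT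
  refine ⟨sSup T, hwS, fun w' hw' hne ⟨p, hp⟩ => ?_, r, hr⟩
  have hp_ne : p ≠ [] := by
    rintro rfl
    cases hp
    exact hne rfl
  have hlt : sSup T < w' := hp.target_lt htop hp_ne
  exact hlt.not_ge (le_csSup hT ⟨hw', p ++ r, hp.append hr⟩)

namespace PathRelClosure

variable {l : BipathSet} {u v w : ℕ} {p q : List ℕ}

theorem map {l' : BipathSet} {g : ℕ → ℕ} (hl : ∀ u v p q, l' u v p q → l u v (p.map g) (q.map g))
    (h : PathRelClosure l' u v p q) : PathRelClosure l u v (p.map g) (q.map g) := by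
  induction h with
  | base hb => exact .base (hl _ _ _ _ hb)
  | refl => exact .refl _ _ _
  | symm _ ih => exact .symm ih
  | trans _ _ ih₁ ih₂ => exact .trans ih₁ ih₂
  | comp _ _ ih₁ ih₂ =>
    rw [List.map_append, List.map_append]
    exact .comp ih₁ ih₂

theorem cons (i : ℕ) (h : PathRelClosure l v w p q) : PathRelClosure l u w (i :: p) (i :: q) :=
  .comp (.refl u v [i]) h

theorem cons_of_bridge {Q' : Quiv} {g : ℕ → ℕ} {i u₀ v₀ : ℕ} {pw qw r : List ℕ}
    (hfull : ∀ u v p q, Q'.IsPath u p v → Q'.IsPath u q v →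
      PathRelClosure l u v (p.map g) (q.map g))
    (hbridge : PathRelClosure l u₀ w (pw.map g) (i :: qw.map g))
    (hpw : Q'.IsPath u₀ pw w) (hqw : Q'.IsPath v₀ qw w) (hr : Q'.IsPath w r v)
    (hp : Q'.IsPath u₀ p v) (hq : Q'.IsPath v₀ q v) :
    PathRelClosure l u₀ v (p.map g) (i :: q.map g) := by
  have h₁ := hfull _ _ _ _ hp (hpw.append hr)
  have h₂ := hbridge.comp (.refl w v (r.map g))
  have h₃ := (hfull _ _ _ _ (hqw.append hr) hq).cons (u := u₀) i
  rw [List.map_append] at h₁ h₃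
  exact h₁.trans (h₂.trans h₃)

end PathRelClosure

theorem comcut_correct_general (Q : Quiv) (hwf : Q.Wellformed) (htop : Q.TopSortedRev)
    (u0 v0 i0 : ℕ) (hu0 : u0 = Q.nbVertex - 1)
    (ha0 : Q.arcs[i0]? = some (u0, v0))
    (Q' : Quiv) (hQ' : Q' = ⟨Q.nbVertex, Q.arcs.eraseIdx i0⟩)
    (l' : BipathSet)
    (hl'full : ∀ u v p q, Q'.IsPath u p v → Q'.IsPath u q v →
      PathRelClosure l' u v p q)
    (Wt : Set ℕ)
    (hWt : Wt = {w | (∃ p, Q'.IsPath u0 p w) ∧ (∃ p, Q'.IsPath v0 p w)})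
    (W : Set ℕ)
    (hW : W = {w ∈ Wt | ∀ w' ∈ Wt, w' ≠ w → ¬ ∃ p, Q'.IsPath w' p w})
    (pw qw : ℕ → List ℕ)
    (hpw : ∀ w ∈ W, Q'.IsPath u0 (pw w) w)
    (hqw : ∀ w ∈ W, Q'.IsPath v0 (qw w) w)
    (l : BipathSet)
    (hl : l = fun u v p q =>
      (∃ p' q', l' u v p' q' ∧ p = p'.map (liftIdx i0) ∧ q = q'.map (liftIdx i0)) ∨
      (∃ w ∈ W, u = u0 ∧ v = w ∧ p = (pw w).map (liftIdx i0) ∧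
        q = i0 :: (qw w).map (liftIdx i0))) :
    ∀ u v p q, Q.IsPath u p v → Q.IsPath u q v → PathRelClosure l u v p q := by
  change Q' = Q.eraseArc i0 at hQ'
  subst hu0 hQ'
  have hfull u v p q (hp : (Q.eraseArc i0).IsPath u p v) (hq : (Q.eraseArc i0).IsPath u q v) :
      PathRelClosure l u v (p.map (liftIdx i0)) (q.map (liftIdx i0)) :=
    (hl'full u v p q hp hq).map fun _ _ p q h => hl ▸ .inl ⟨p, q, h, rfl, rfl⟩
  have hmixed v p q (hp : (Q.eraseArc i0).IsPath (Q.nbVertex - 1) p v)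
      (hq : (Q.eraseArc i0).IsPath v0 q v) :
      PathRelClosure l (Q.nbVertex - 1) v (p.map (liftIdx i0)) (i0 :: q.map (liftIdx i0)) := by
    have hbdd : BddAbove Wt :=
      ⟨Q.nbVertex - 1, fun _ hw => (hWt ▸ hw).1.elim fun _ h => h.target_le (htop.eraseArc i0)⟩
    obtain ⟨w, hwWt, hwmin, r, hr⟩ :=
      (Q.eraseArc i0).exists_unreachable_reaching (htop.eraseArc i0) hbdd
        (hWt ▸ ⟨⟨p, hp⟩, q, hq⟩ : v ∈ Wt)
    have hwW : w ∈ W := hW ▸ ⟨hwWt, hwmin⟩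
    exact .cons_of_bridge hfull (.base (hl ▸ .inr ⟨w, hwW, rfl, rfl, rfl, rfl⟩))
      (hpw w hwW) (hqw w hwW) hr hp hq
  intro u v p q hp hq
  rcases hp.eq_map_liftIdx_or_eq_cons hwf htop ha0 with ⟨p', hp', rfl⟩ | ⟨rfl, p', hp', rfl⟩ <;>
    rcases hq.eq_map_liftIdx_or_eq_cons hwf htop ha0 with ⟨q', hq', rfl⟩ | ⟨hu, q', hq', rfl⟩
  · exact hfull u v p' q' hp' hq'
  · exact hu ▸ hmixed v p' q' (hu ▸ hp') hq'
  · exact (hmixed v q' p' hq' hp').symm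
  · exact (hfull v0 v p' q' hp' hq').cons i0

/-- Correctness of the `comcut` construction. `Q` is topologically sorted in reverse
order, `u0 = n - 1` is the top vertex, `a0` is the arc of `Q` at index `i0`, with
source `u0` and target `v0`, and `Q'` is `Q` deprived of the arc `a0`. Given
`l' ⊆ BP_{Q'}` with `cl_{Q'}(l') = BP_{Q'}`, given the set `W̃ = acc(u0) ∩ acc(v0)`
of vertices accessible in `Q'` both from `u0` and from `v0`, the set
`W = {w ∈ W̃ | ∀ w' ∈ W̃ \ {w}, w ∉ acc(w')}`, and chosen paths `p_w : u0 → w` and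
`q_w : v0 → w` in `Q'` for each `w ∈ W`, the set
`l = l' ∪ {(p_w, a0 ⋅ q_w) | w ∈ W}` (with paths of `Q'` viewed as paths of `Q`)
satisfies `cl_Q(l) = BP_Q`. -/
theorem comcut_correct (Q : Quiv) (hwf : Q.Wellformed) (htop : Q.TopSortedRev)
    (hn : 0 < Q.nbVertex)
    (u0 v0 i0 : ℕ) (hu0 : u0 = Q.nbVertex - 1)
    (ha0 : Q.arcs[i0]? = some (u0, v0))
    (Q' : Quiv) (hQ' : Q' = ⟨Q.nbVertex, Q.arcs.eraseIdx i0⟩)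
    (l' : BipathSet)
    (hl'bp : ∀ u v p q, l' u v p q → Q'.IsPath u p v ∧ Q'.IsPath u q v)
    (hl'full : ∀ u v p q, Q'.IsPath u p v → Q'.IsPath u q v →
      PathRelClosure l' u v p q)
    (Wt : Set ℕ)
    (hWt : Wt = {w | (∃ p, Q'.IsPath u0 p w) ∧ (∃ p, Q'.IsPath v0 p w)})
    (W : Set ℕ)
    (hW : W = {w ∈ Wt | ∀ w' ∈ Wt, w' ≠ w → ¬ ∃ p, Q'.IsPath w' p w})
    (pw qw : ℕ → List ℕ)
    (hpw : ∀ w ∈ W, Q'.IsPath u0 (pw w) w)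
    (hqw : ∀ w ∈ W, Q'.IsPath v0 (qw w) w)
    (l : BipathSet)
    (hl : l = fun u v p q =>
      (∃ p' q', l' u v p' q' ∧ p = p'.map (liftIdx i0) ∧ q = q'.map (liftIdx i0)) ∨
      (∃ w ∈ W, u = u0 ∧ v = w ∧ p = (pw w).map (liftIdx i0) ∧
        q = i0 :: (qw w).map (liftIdx i0))) :
    ∀ u v p q, Q.IsPath u p v → Q.IsPath u q v → PathRelClosure l u v p q :=
  comcut_correct_general Q hwf htop u0 v0 i0 hu0 ha0 Q' hQ' l' hl'full Wt hWt W hW pw qw hpw hqw l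
    hl
end

section
/- Let d be a type, let M be a diagram model on d, let ctx be a list of elements of d, and let f be a formula of the deep-embedded diagrammatic language. Then the evaluation of the dual formula formula_dual f in the dual model model_dual M with context ctx holds if and only if the evaluation of f in M with context ctx holds. -/
/-- The dual quiver: same vertices, every arc reversed. -/
def Quiv.dual (Q : Quiv) : Quiv :=
  ⟨Q.nbVertex, Q.arcs.map fun a => (a.2, a.1)⟩

/-- Terms of the deep-embedded language: variables (de Bruijn indices) and
restrictions along subquivers. -/
inductive Term where
  | var : ℕ → Term
  | restr : Subquiv → Term → Term

/-- Formulas of the deep-embedded first-order language for diagrams. -/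
inductive Formula where
  | all : Quiv → Formula → Formula
  | ex : Quiv → Formula → Formula
  | imp : Formula → Formula → Formula
  | and : Formula → Formula → Formula
  | tru : Formula
  | commute : Term → Formula
  | eqD : Term → Term → Formula

/-- The dual formula: every quiver annotation is replaced by its dual quiver. -/
def Formula.dual : Formula → Formula
  | .all Q f => .all Q.dual f.dual
  | .ex Q f => .ex Q.dual f.dual
  | .imp f1 f2 => .imp f1.dual f2.dual
  | .and f1 f2 => .and f1.dual f2.dual
  | .tru => .tru
  | .commute t => .commute t
  | .eqD t1 t2 => .eqD t1 t2

/-- A path relation: a family of equivalence relations on finite sequences of arc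
indices, indexed by pairs of vertices, compatible with concatenation. -/
structure PathRel where
  rel : ℕ → ℕ → List ℕ → List ℕ → Prop
  equiv : ∀ u v, Equivalence (rel u v)
  comp : ∀ u v w p p' q q', rel u v p p' → rel v w q q' →
    rel u w (p ++ q) (p' ++ q')

/-- The dual path relation, on reversed paths. -/
def PathRel.dual (r : PathRel) : PathRel where
  rel u v p q := r.rel v u p.reverse q.reverse
  equiv u v :=
    ⟨fun _ => (r.equiv v u).refl _, fun h => (r.equiv v u).symm h,
     fun h1 h2 => (r.equiv v u).trans h1 h2⟩
  comp u v w p p' q q' h1 h2 := by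
    simpa [List.reverse_append] using r.comp w v u _ _ _ _ h2 h1

/-- A diagram model on a carrier type `d`: an underlying quiver map, a restriction
operation, a setoid (equivalence) relation, and a path relation for each diagram. -/
structure Model (d : Type*) where
  toQuiver : d → Quiv
  restr : Subquiv → d → d
  eqD : d → d → Prop
  eqD_equiv : Equivalence eqD
  eqComp : d → PathRel

/-- The dual model: same carrier, restriction and setoid relation, but the quiver map
is composed with quiver dualization and each path relation is replaced by the path
relation on reversed paths. -/
def Model.dual {d : Type*} (M : Model d) : Model d where
  toQuiver D := (M.toQuiver D).dual
  restr := M.restr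
  eqD := M.eqD
  eqD_equiv := M.eqD_equiv
  eqComp D := (M.eqComp D).dual

/-- A diagram commutes when its path relation is full on its underlying quiver:
any two paths with the same source and the same target are related. -/
def Model.Commutes {d : Type*} (M : Model d) (D : d) : Prop :=
  ∀ u v p q, (M.toQuiver D).IsPath u p v → (M.toQuiver D).IsPath u q v →
    (M.eqComp D).rel u v p q

/-- Evaluation of a term in a context (a list of diagrams): `var k` looks up the
`k`-th entry (`none` if the context is too short), `restr m t` applies the
restriction operation. -/
def termEval {d : Type*} (M : Model d) (ctx : List d) : Term → Option d
  | .var k => ctx[k]?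
  | .restr m t => (termEval M ctx t).map (M.restr m)

/-- Evaluation of a formula in a model, relative to a context of diagrams. -/
def formulaEval {d : Type*} (M : Model d) : List d → Formula → Prop
  | ctx, .all Q f => ∀ D : d, M.toQuiver D = Q → formulaEval M (D :: ctx) f
  | ctx, .ex Q f => ∃ D : d, M.toQuiver D = Q ∧ formulaEval M (D :: ctx) f
  | ctx, .imp f1 f2 => formulaEval M ctx f1 → formulaEval M ctx f2
  | ctx, .and f1 f2 => formulaEval M ctx f1 ∧ formulaEval M ctx f2
  | _, .tru => True
  | ctx, .commute t =>
      match termEval M ctx t with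
      | some D => M.Commutes D
      | none => False
  | ctx, .eqD t1 t2 =>
      match termEval M ctx t1, termEval M ctx t2 with
      | some D1, some D2 => M.eqD D1 D2
      | _, _ => False

theorem Quiv.dual_dual (Q : Quiv) : Q.dual.dual = Q := by
  cases Q with
  | mk n a =>
    simp [Quiv.dual, List.map_map, Function.comp_def]

theorem Quiv.dual_inj {Q Q' : Quiv} (h : Q.dual = Q'.dual) : Q = Q' := by
  have := congrArg Quiv.dual h
  rwa [Quiv.dual_dual, Quiv.dual_dual] at this

theorem Quiv.dual_arcs_get (Q : Quiv) (i : ℕ) :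
    Q.dual.arcs[i]? = Q.arcs[i]?.map (fun a => (a.2, a.1)) := by
  simp [Quiv.dual]

theorem Quiv.IsPath.append_s6 {Q : Quiv} {u v w : ℕ} {p q : List ℕ}
    (h1 : Q.IsPath u p v) (h2 : Q.IsPath v q w) : Q.IsPath u (p ++ q) w := by
  induction h1 with
  | nil => simpa
  | cons ha _ ih => exact Quiv.IsPath.cons ha (ih h2)

theorem Quiv.IsPath.dual {Q : Quiv} {u v : ℕ} {p : List ℕ}
    (h : Q.IsPath u p v) : Q.dual.IsPath v p.reverse u := by
  induction h with
  | nil => exact Quiv.IsPath.nil _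
  | cons ha _ ih =>
    rename_i a b c i p'
    simp only [List.reverse_cons]
    refine ih.append_s6 (Quiv.IsPath.cons ?_ (Quiv.IsPath.nil _))
    rw [Quiv.dual_arcs_get, ha]; rfl

theorem Quiv.IsPath.of_dual {Q : Quiv} {u v : ℕ} {p : List ℕ}
    (h : Q.dual.IsPath u p v) : Q.IsPath v p.reverse u := by
  have := h.dual
  rwa [Quiv.dual_dual] at this

theorem Model.dual_commutes {d : Type*} (M : Model d) (D : d) :
    M.dual.Commutes D ↔ M.Commutes D := by
  constructor
  · intro h u v p q hp hq
    have := h v u p.reverse q.reverse hp.dual hq.dual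
    simpa [Model.dual, PathRel.dual] using this
  · intro h u v p q hp hq
    exact h v u p.reverse q.reverse hp.of_dual hq.of_dual

theorem termEval_dual {d : Type*} (M : Model d) (ctx : List d) (t : Term) :
    termEval M.dual ctx t = termEval M ctx t := by
  induction t with
  | var k => rfl
  | restr m t ih => rw [termEval, termEval, ih]; rfl

/-- Structural duality: the evaluation of the dual formula in the dual model holds
if and only if the evaluation of the original formula in the original model holds. -/
theorem formulaEval_duality {d : Type*} (M : Model d) (ctx : List d) (f : Formula) :
    formulaEval M.dual ctx f.dual ↔ formulaEval M ctx f := by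
  induction f generalizing ctx with
  | all Q f ih =>
    simp only [Formula.dual, formulaEval]
    constructor
    · intro h D hD
      exact (ih _).mp (h D (by simp [Model.dual, hD]))
    · intro h D hD
      exact (ih _).mpr (h D (Quiv.dual_inj hD))
  | ex Q f ih =>
    simp only [Formula.dual, formulaEval]
    constructor
    · rintro ⟨D, hD, hf⟩
      exact ⟨D, Quiv.dual_inj hD, (ih _).mp hf⟩
    · rintro ⟨D, hD, hf⟩
      exact ⟨D, by simp [Model.dual, hD], (ih _).mpr hf⟩
  | imp f1 f2 ih1 ih2 =>
    simp only [Formula.dual, formulaEval]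
    rw [ih1, ih2]
  | and f1 f2 ih1 ih2 =>
    simp only [Formula.dual, formulaEval]
    rw [ih1, ih2]
  | tru => simp [Formula.dual, formulaEval]
  | commute t =>
    simp only [Formula.dual, formulaEval, termEval_dual]
    cases termEval M ctx t with
    | none => rfl
    | some D => exact M.dual_commutes D
  | eqD t1 t2 =>
    simp only [Formula.dual, formulaEval, termEval_dual]
    cases termEval M ctx t1 <;> cases termEval M ctx t2 <;> rfl
end

section
/- Let d be a diagram model, let f be a formula of the deep-embedded diagrammatic language, and let pf be a valid proof (a list of valid tactics). If f is well-formed in the empty context and the proof checker check_proof f pf returns true, then the evaluation of f in d with the empty context holds: formula_eval d [] f. -/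
/-- The restriction of a quiver along a subquiver: the selected vertices, relabeled
in order, and the selected arcs, with endpoints relabeled accordingly. -/
def Subquiv.restrQuiver (m : Subquiv) (Q : Quiv) : Quiv :=
  ⟨m.vertices.length,
   (m.arcs.filterMap fun i => Q.arcs[i]?).map fun a =>
     (m.vertices.idxOf a.1, m.vertices.idxOf a.2)⟩

/-- Well-formedness of the restriction of a quiver along a subquiver: arc indices in
bound, selected vertices duplicate-free and in bound, and every selected arc has its
endpoints among the selected vertices. -/
def Subquiv.RestrWf (m : Subquiv) (Q : Quiv) : Prop :=
  (∀ i ∈ m.arcs, i < Q.arcs.length) ∧ m.vertices.Nodup ∧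
  (∀ x ∈ m.vertices, x < Q.nbVertex) ∧
  (∀ i ∈ m.arcs, ∀ a, Q.arcs[i]? = some a → a.1 ∈ m.vertices ∧ a.2 ∈ m.vertices)

/-- The sort of a term in a context of quivers giving the sorts of the variables. -/
def termSort (l : List Quiv) : Term → Option Quiv
  | .var k => l[k]?
  | .restr m t => (termSort l t).map m.restrQuiver

/-- A term is well-formed in a context `l` of quivers if the context is long enough
and every restriction in the term is well-formed for the sort it applies to. -/
def termWf (l : List Quiv) : Term → Prop
  | .var k => k < l.length
  | .restr m t => termWf l t ∧ ∀ Q, termSort l t = some Q → m.RestrWf Q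

/-- A formula is well-formed in a context `l` of quivers if `l` provides a sort to
each free variable and all the terms appearing in it have a well-formed sort. -/
def formulaWf (l : List Quiv) : Formula → Prop
  | .all Q f => formulaWf (Q :: l) f
  | .ex Q f => formulaWf (Q :: l) f
  | .imp f1 f2 => formulaWf l f1 ∧ formulaWf l f2
  | .and f1 f2 => formulaWf l f1 ∧ formulaWf l f2
  | .tru => True
  | .commute t => termWf l t
  | .eqD t1 t2 => termWf l t1 ∧ termWf l t2

/-- A sequent: a context of quivers, a list of premises and a goal. -/
structure Sequent where
  context : List Quiv
  premises : List Formula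
  goal : Formula

/-- Conjunction of a list of premises, ending with `tru`. -/
def premisesFormula : List Formula → Formula
  | [] => .tru
  | h :: t => .and h (premisesFormula t)

/-- The formula associated with a sequent: the universal closure over its context of
the implication from the conjunction of its premises to its goal. -/
def Sequent.toFormula (s : Sequent) : Formula :=
  s.context.foldr Formula.all (.imp (premisesFormula s.premises) s.goal)

/-- A sequent is well-formed when its associated formula is well-formed in the empty
context. -/
def Sequent.Wf (s : Sequent) : Prop := formulaWf [] s.toFormula

/-- Evaluation of a sequent in a model: the evaluation of its associated formula. -/
def sequentEval {d : Type} (M : Model d) (s : Sequent) : Prop :=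
  formulaEval M [] s.toFormula

/-- A tactic: a function making progress in a proof, from sequents to optional
sequents. -/
def Tac : Type := Sequent → Option Sequent

/-- A tactic is valid when, on any well-formed sequent on which it succeeds, it
produces a well-formed sequent whose evaluation implies (in every diagram model) the
evaluation of the initial sequent. -/
def Tac.Valid (τ : Tac) : Prop :=
  ∀ s s', s.Wf → τ s = some s' →
    s'.Wf ∧ ∀ (d : Type) (M : Model d), sequentEval M s' → sequentEval M s

/-- The proof checker: starting from the sequent with empty context, no premises and
goal `f`, apply the tactics in order; fail if some tactic fails, and otherwise
succeed exactly when the final goal is `tru`. -/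
def checkProofAux : Sequent → List Tac → Bool
  | s, [] => match s.goal with | .tru => true | _ => false
  | s, τ :: pf =>
      match τ s with
      | some s' => checkProofAux s' pf
      | none => false

def checkProof (f : Formula) (pf : List Tac) : Bool :=
  checkProofAux ⟨[], [], f⟩ pf

lemma formulaEval_foldr_all_imp_tru {d : Type*} (M : Model d) (p : Formula) :
    ∀ (l : List Quiv) (ctx : List d), formulaEval M ctx (l.foldr Formula.all (.imp p .tru))
  | [], _ => fun _ => trivial
  | _ :: l, ctx => fun D _ => formulaEval_foldr_all_imp_tru M p l (D :: ctx)

lemma sequentEval_of_goal_eq_tru {d : Type} (M : Model d) {s : Sequent}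
    (h : s.goal = .tru) : sequentEval M s := by
  obtain ⟨Γ, _, g⟩ := s
  subst h
  exact formulaEval_foldr_all_imp_tru M _ Γ []

lemma Sequent.wf_init_iff (f : Formula) : Sequent.Wf ⟨[], [], f⟩ ↔ formulaWf [] f := by
  simp [Sequent.Wf, Sequent.toFormula, premisesFormula, formulaWf]

lemma sequentEval_init_iff {d : Type} (M : Model d) (f : Formula) :
    sequentEval M ⟨[], [], f⟩ ↔ formulaEval M [] f := by
  simp [sequentEval, Sequent.toFormula, premisesFormula, formulaEval]

theorem sequentEval_of_checkProofAux {d : Type} (M : Model d) {pf : List Tac}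
    (hvalid : ∀ τ ∈ pf, τ.Valid) {s : Sequent} (hwf : s.Wf)
    (hcheck : checkProofAux s pf = true) : sequentEval M s := by
  induction pf generalizing s with
  | nil =>
    apply sequentEval_of_goal_eq_tru
    cases hg : s.goal <;> simp_all [checkProofAux]
  | cons τ pf ih =>
    obtain ⟨s', hτ⟩ : ∃ s', τ s = some s' := by
      cases hτ : τ s <;> simp_all [checkProofAux]
    have hcheck' : checkProofAux s' pf = true := by simpa [checkProofAux, hτ] using hcheck
    obtain ⟨hwf', hsound⟩ := hvalid τ List.mem_cons_self s s' hwf hτ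
    exact hsound d M (ih (fun τ' h => hvalid τ' (List.mem_cons_of_mem τ h)) hwf' hcheck')

/-- Correctness of the proof checker: if `f` is well-formed in the empty context and
the checker accepts a valid proof `pf` (a list of valid tactics) of `f`, then `f`
evaluates to a true statement in any diagram model, with the empty context. -/
theorem check_proof_valid {d : Type} (M : Model d) (f : Formula) (pf : List Tac)
    (hvalid : ∀ τ ∈ pf, τ.Valid)
    (hwf : formulaWf [] f) (hcheck : checkProof f pf = true) :
    formulaEval M [] f :=
  (sequentEval_init_iff M f).mp
    (sequentEval_of_checkProofAux M hvalid ((Sequent.wf_init_iff f).mpr hwf) hcheck)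
end

section
/- Let f be a formula of the deep-embedded diagrammatic language and let bpf be a biproof, i.e., a pair (primal proof, dual proof) of lists of tactics of equal length. If the tactics in the two proofs are pairwise dual — meaning that for every position i and every sequent s, applying the i-th dual tactic to the dual of s yields the dual of the result of applying the i-th primal tactic to s — then checking the dual formula formula_dual f against the dual proof gives the same boolean result as checking f against the primal proof: check_proof (formula_dual f) (biproof_dual bpf) = check_proof f (biproof_primal bpf). -/
/-- The dual of a sequent: all quivers of the context are dualized, the premises and
the goal are dualized. -/
def Sequent.dual (s : Sequent) : Sequent :=
  ⟨s.context.map Quiv.dual, s.premises.map Formula.dual, s.goal.dual⟩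

/-- A biproof: a pair of proofs (lists of tactics) of the same length. -/
structure Biproof where
  primal : List Tac
  dual : List Tac
  eq_size : primal.length = dual.length

/-- The tactics of a biproof are pairwise dual: at every position, applying the dual
tactic to the dual of any sequent yields the dual of the result of applying the
primal tactic to that sequent. -/
def Biproof.PairwiseDual (bpf : Biproof) : Prop :=
  List.Forall₂ (fun τ τ' => ∀ s : Sequent, Option.map Sequent.dual (τ s) = τ' s.dual)
    bpf.primal bpf.dual

theorem aux (pf pf' : List Tac)
    (h : List.Forall₂ (fun τ τ' => ∀ s : Sequent, Option.map Sequent.dual (τ s) = τ' s.dual) pf pf') :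
    ∀ s : Sequent, checkProofAux s.dual pf' = checkProofAux s pf := by
  induction h with
  | nil =>
      intro s
      cases hg : s.goal <;> simp [checkProofAux, Sequent.dual, hg, Formula.dual]
  | @cons τ τ' _ _ hd _ ih =>
      intro s
      specialize hd s
      cases hτ : τ s <;> simp [checkProofAux, ← hd, hτ, ih]

/-- Duality for reified proofs: if the tactics in the pair of proofs `bpf` are
pairwise dual, then the primal proof checks against a formula exactly when the dual
proof checks against its dual formula. -/
theorem biproof_duality_theorem (f : Formula) (bpf : Biproof)
    (h : bpf.PairwiseDual) :
    checkProof f.dual bpf.dual = checkProof f bpf.primal := by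
  have := aux bpf.primal bpf.dual h ⟨[], [], f⟩
  simpa [checkProof, Sequent.dual] using this
end

section
/- Let Q be the five-lemma quiver: the quiver with 10 vertices arranged as two rows of 5 (labels 0–4 on the top row, 5–9 on the bottom row), with horizontal arcs i → i+1 for i in {0,1,2,3} and 5+i → 5+i+1 for i in {0,1,2,3}, and vertical arcs i → 5+i for i in {0,…,4}. Let π be a path relation on Q. If, for each of the four elementary squares (with corners i, i+1, 5+i, 5+i+1, for i in {0,1,2,3}), π relates the two length-two paths from the square's top-left corner i to its bottom-right corner 5+i+1 (right-then-down and down-then-right), then π is full: π relates any two paths of Q with the same source and the same target. -/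
/-- A path relation: a family of equivalence relations on finite sequences of arc
indices, indexed by pairs of vertices, compatible with concatenation. -/
structure PathRelation where
  rel : ℕ → ℕ → List ℕ → List ℕ → Prop
  refl : ∀ u v p, rel u v p p
  symm : ∀ {u v p q}, rel u v p q → rel u v q p
  trans : ∀ {u v p q r}, rel u v p q → rel u v q r → rel u v p r
  comp : ∀ {u v w p p' q q'}, rel u v p p' → rel v w q q' →
    rel u w (p ++ q) (p' ++ q')

/-- The five-lemma quiver: two rows of 5 vertices (top row `0`–`4`, bottom row
`5`–`9`), horizontal arcs `i → i+1` (indices `0`–`3`) and `5+i → 5+i+1` (indices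
`4`–`7`), and vertical arcs `i → 5+i` (indices `8`–`12`). -/
def fiveQuiv : Quiv :=
  ⟨10, [(0,1), (1,2), (2,3), (3,4),
        (5,6), (6,7), (7,8), (8,9),
        (0,5), (1,6), (2,7), (3,8), (4,9)]⟩

/- A path relation is full as soon as every path is related to a chosen canonical path between
its endpoints; by induction on the path it suffices that prepending an arc to a canonical path
gives a path related to the canonical one. In the five-lemma quiver the canonical path goes down
as early as possible, and prepending a top arc to a canonical path that goes down is exactly one
elementary square. -/

namespace PathRelation

theorem rel_canon_of_isPath {Q : Quiv} (π : PathRelation) (c : ℕ → ℕ → List ℕ)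
    (hnil : ∀ u, c u u = [])
    (hcons : ∀ a u w v p, Q.arcs[a]? = some (u, w) → Q.IsPath w p v →
      π.rel u v (a :: c w v) (c u v))
    {u v : ℕ} {p : List ℕ} (hp : Q.IsPath u p v) : π.rel u v p (c u v) := by
  induction hp with
  | nil u => rw [hnil]; exact π.refl u u []
  | @cons u w v a p ha hp ih =>
    exact π.trans (π.comp (π.refl u w [a]) ih) (hcons a u w v p ha hp)

theorem rel_of_isPath_of_canon {Q : Quiv} (π : PathRelation) (c : ℕ → ℕ → List ℕ)
    (hnil : ∀ u, c u u = [])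
    (hcons : ∀ a u w v p, Q.arcs[a]? = some (u, w) → Q.IsPath w p v →
      π.rel u v (a :: c w v) (c u v))
    {u v : ℕ} {p q : List ℕ} (hp : Q.IsPath u p v) (hq : Q.IsPath u q v) : π.rel u v p q :=
  π.trans (π.rel_canon_of_isPath c hnil hcons hp) (π.symm (π.rel_canon_of_isPath c hnil hcons hq))

end PathRelation

theorem fiveQuiv_arc {a u w : ℕ} (h : fiveQuiv.arcs[a]? = some (u, w)) :
    (a < 4 ∧ u = a ∧ w = a + 1) ∨ (4 ≤ a ∧ a < 8 ∧ u = a + 1 ∧ w = a + 2) ∨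
      (8 ≤ a ∧ a < 13 ∧ u = a - 8 ∧ w = a - 3) := by
  have ha : a < 13 := by
    by_contra! ha
    rw [List.getElem?_eq_none (by simp [fiveQuiv]; omega)] at h
    cases h
  interval_cases a <;> simp [fiveQuiv] at h <;> omega

theorem fiveQuiv_reach_of_isPath {u v : ℕ} {p : List ℕ} (hp : fiveQuiv.IsPath u p v) :
    u ≤ v ∧ (v < 5 → u < 5) ∧ (u < 5 → 5 ≤ v → u + 5 ≤ v) := by
  induction hp with
  | nil => omega
  | cons ha _ ih => have := fiveQuiv_arc ha; omega

/-- Down as early as possible, then right. The horizontal arc out of `u` has index `u` on the top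
row and `u - 1` on the bottom row. -/
def fiveCanon (u v : ℕ) : List ℕ :=
  if v ≤ u then []
  else if u < 5 ∧ 5 ≤ v then (8 + u) :: fiveCanon (u + 5) v
  else (if u < 5 then u else u - 1) :: fiveCanon (u + 1) v
termination_by v - u

theorem fiveCanon_self (u : ℕ) : fiveCanon u u = [] := by
  rw [fiveCanon, if_pos le_rfl]

theorem fiveCanon_down {u v : ℕ} (hu : u < 5) (hv : 5 ≤ v) :
    fiveCanon u v = (8 + u) :: fiveCanon (u + 5) v := by
  rw [fiveCanon, if_neg (by omega), if_pos ⟨hu, hv⟩]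

theorem fiveCanon_right {u v : ℕ} (huv : u < v) (h : v < 5 ∨ 5 ≤ u) :
    fiveCanon u v = (if u < 5 then u else u - 1) :: fiveCanon (u + 1) v := by
  rw [fiveCanon, if_neg (by omega), if_neg (by omega)]

theorem fiveQuiv_rel_cons_canon (π : PathRelation)
    (hsq : ∀ i < 4, π.rel i (6 + i) [i, 9 + i] [8 + i, 4 + i])
    {a u w v : ℕ} {p : List ℕ} (ha : fiveQuiv.arcs[a]? = some (u, w))
    (hp : fiveQuiv.IsPath w p v) : π.rel u v (a :: fiveCanon w v) (fiveCanon u v) := by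
  have hwv := fiveQuiv_reach_of_isPath hp
  rcases fiveQuiv_arc ha with ⟨hi, rfl, rfl⟩ | ⟨hi, hi', rfl, rfl⟩ | ⟨hi, hi', rfl, rfl⟩
  · rcases lt_or_ge v 5 with hv | hv
    · have right : fiveCanon u v = u :: fiveCanon (u + 1) v := by
        rw [fiveCanon_right (by omega) (.inl hv), if_pos (by omega)]
      rw [right]
      exact π.refl _ _ _
    · have top : fiveCanon (u + 1) v = (9 + u) :: fiveCanon (6 + u) v := by
        rw [fiveCanon_down (by omega) hv, show 8 + (u + 1) = 9 + u by omega,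
          show u + 1 + 5 = 6 + u by omega]
      have left : fiveCanon u v = (8 + u) :: (4 + u) :: fiveCanon (6 + u) v := by
        rw [fiveCanon_down (by omega) hv, fiveCanon_right (by omega) (.inr (by omega)),
          if_neg (by omega), show u + 5 - 1 = 4 + u by omega, show u + 5 + 1 = 6 + u by omega]
      rw [top, left]
      exact π.comp (hsq u hi) (π.refl _ _ _)
  · have right : fiveCanon (a + 1) v = a :: fiveCanon (a + 2) v := by
      rw [fiveCanon_right (by omega) (.inr (by omega)), if_neg (by omega)]; rfl
    rw [right]
    exact π.refl _ _ _
  · have down : fiveCanon (a - 8) v = a :: fiveCanon (a - 3) v := by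
      rw [fiveCanon_down (by omega) (by omega)]
      congr 2 <;> omega
    rw [down]
    exact π.refl _ _ _

/-- If, for each of the four elementary squares of the five-lemma quiver, `π` relates
the two length-two paths from the square's top-left corner `i` to its bottom-right
corner `5+i+1` (right-then-down, i.e. arcs `[i, 9+i]`, and down-then-right, i.e.
arcs `[8+i, 4+i]`), then `π` relates any two paths of the five-lemma quiver with the
same source and the same target. -/
theorem fiveQuiv_commutes (π : PathRelation)
    (hsq : ∀ i < 4, π.rel i (6 + i) [i, 9 + i] [8 + i, 4 + i]) :
    ∀ u v p q, fiveQuiv.IsPath u p v → fiveQuiv.IsPath u q v → π.rel u v p q :=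
  fun _ _ _ _ hp hq => π.rel_of_isPath_of_canon fiveCanon fiveCanon_self
    (fun _ _ _ _ _ ha hp => fiveQuiv_rel_cons_canon π hsq ha hp) hp hq
end

section
/- The commerge problem is decidable for finite acyclic quivers: there is an algorithm (a computable boolean-valued function) that, given a finite acyclic quiver Q and a finite list of subquivers Q_1, …, Q_k of Q, returns true if and only if the smallest path relation cl_Q(l) containing l = ∪_i BP_{Q_i} (the union of the sets of bipaths of the quivers induced by the Q_i, viewed as bipaths of Q) is full, i.e., equals the set BP_Q of all bipaths of Q. -/
/-- Quivers are encodable as pairs. -/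
def Quiv.equivProd : Quiv ≃ ℕ × List (ℕ × ℕ) where
  toFun Q := (Q.nbVertex, Q.arcs)
  invFun x := ⟨x.1, x.2⟩
  left_inv := fun ⟨_, _⟩ => rfl
  right_inv := fun ⟨_, _⟩ => rfl

/-- Subquivers are encodable as pairs. -/
def Subquiv.equivProd : Subquiv ≃ List ℕ × List ℕ where
  toFun S := (S.vertices, S.arcs)
  invFun x := ⟨x.1, x.2⟩
  left_inv := fun ⟨_, _⟩ => rfl
  right_inv := fun ⟨_, _⟩ => rfl

instance : Primcodable Quiv := Primcodable.ofEquiv _ Quiv.equivProd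
instance : Primcodable Subquiv := Primcodable.ofEquiv _ Subquiv.equivProd

/-!
In an acyclic quiver with `n` vertices every path has at most `n` arcs, so the bipaths of `Q`
form a finite, explicitly enumerable set. A path related by `cl_Q(l)` to a path of `Q` from
`u` to `v` is itself a path of `Q` from `u` to `v`, so the restriction of `cl_Q(l)` to `BP_Q`
is the least subset of this finite set closed under reflexivity, the generators, symmetry,
transitivity and concatenation. That subset is computed by saturation, and fullness is a
finite comparison.
-/

namespace Quiv

variable {Q : Quiv} {u v w : ℕ} {p q : List ℕ}

theorem isPath_cons_iff {i : ℕ} :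
    Q.IsPath u (i :: p) w ↔ ∃ v, Q.arcs[i]? = some (u, v) ∧ Q.IsPath v p w := by
  constructor
  · rintro (_ | ⟨hi, hp⟩)
    exact ⟨_, hi, hp⟩
  · rintro ⟨v, hi, hp⟩
    exact .cons hi hp

theorem IsPath.append_s13 (hp : Q.IsPath u p v) (hq : Q.IsPath v q w) : Q.IsPath u (p ++ q) w := by
  induction hp with
  | nil => exact hq
  | cons hi _ ih => exact .cons hi (ih hq)

theorem IsPath.exists_of_append (h : Q.IsPath u (p ++ q) w) :
    ∃ v, Q.IsPath u p v ∧ Q.IsPath v q w := by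
  induction p generalizing u with
  | nil => exact ⟨u, .nil u, h⟩
  | cons i p ih =>
    obtain ⟨x, hi, h⟩ := isPath_cons_iff.1 h
    obtain ⟨v, hp, hq⟩ := ih h
    exact ⟨v, .cons hi hp, hq⟩

theorem IsPath.tgt_unique {v' : ℕ} (h : Q.IsPath u p v) (h' : Q.IsPath u p v') : v = v' := by
  induction h with
  | nil => cases h'; rfl
  | cons hi _ ih =>
    obtain ⟨x, hi', h'⟩ := isPath_cons_iff.1 h'
    cases hi.symm.trans hi'
    exact ih h'

theorem IsPath.src_unique {u' v' : ℕ} (hp : p ≠ []) (h : Q.IsPath u p v)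
    (h' : Q.IsPath u' p v') : u = u' := by
  obtain ⟨i, p, rfl⟩ := List.exists_cons_of_ne_nil hp
  obtain ⟨x, hi, -⟩ := isPath_cons_iff.1 h
  obtain ⟨x', hi', -⟩ := isPath_cons_iff.1 h'
  cases hi.symm.trans hi'
  rfl

theorem IsPath.lt_length {i : ℕ} (h : Q.IsPath u p v) (hi : i ∈ p) : i < Q.arcs.length := by
  induction h with
  | nil => cases hi
  | cons hj _ ih =>
    rcases List.mem_cons.1 hi with rfl | hi
    · exact (List.getElem?_eq_some_iff.1 hj).1
    · exact ih hi

theorem IsPath.src_lt (hwf : Q.Wellformed) (hp : p ≠ []) (h : Q.IsPath u p v) :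
    u < Q.nbVertex := by
  obtain ⟨i, p, rfl⟩ := List.exists_cons_of_ne_nil hp
  obtain ⟨x, hi, -⟩ := isPath_cons_iff.1 h
  exact (hwf _ (List.mem_of_getElem? hi)).1

theorem IsPath.tgt_lt (hwf : Q.Wellformed) (h : Q.IsPath u p v) (hu : u < Q.nbVertex) :
    v < Q.nbVertex := by
  induction h with
  | nil => exact hu
  | cons hi _ ih => exact ih (hwf _ (List.mem_of_getElem? hi)).2

theorem IsPath.eq_nil_of_cycle (hac : Q.Acyclic) (h : Q.IsPath u p u) : p = [] :=
  by_contra fun hp => hac u p hp h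

theorem IsPath.exists_nodup_vertices (hac : Q.Acyclic) (h : Q.IsPath u p v) :
    ∃ vs : List ℕ, vs.length = p.length + 1 ∧ vs.Nodup ∧
      ∀ x ∈ vs, ∃ q, Q.IsPath u q x := by
  induction h with
  | nil u => exact ⟨[u], rfl, List.nodup_singleton u, by simpa using ⟨[], .nil u⟩⟩
  | @cons u v w i p hi _ ih =>
    obtain ⟨vs, hlen, hnd, hreach⟩ := ih
    refine ⟨u :: vs, by simp [hlen], List.nodup_cons.2 ⟨fun hu => ?_, hnd⟩, ?_⟩
    · obtain ⟨q, hq⟩ := hreach u hu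
      exact List.cons_ne_nil i q ((IsPath.cons hi hq).eq_nil_of_cycle hac)
    · rintro x (_ | ⟨_, hx⟩)
      · exact ⟨[], .nil u⟩
      · obtain ⟨q, hq⟩ := hreach x hx
        exact ⟨i :: q, .cons hi hq⟩

theorem IsPath.length_le (hwf : Q.Wellformed) (hac : Q.Acyclic) (h : Q.IsPath u p v) :
    p.length ≤ Q.nbVertex := by
  rcases eq_or_ne p [] with rfl | hp
  · exact Nat.zero_le _
  obtain ⟨vs, hlen, hnd, hreach⟩ := h.exists_nodup_vertices hac
  have hsub : vs.toFinset ⊆ Finset.range Q.nbVertex := fun x hx => by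
    obtain ⟨q, hq⟩ := hreach x (List.mem_toFinset.1 hx)
    exact Finset.mem_range.2 (hq.tgt_lt hwf (h.src_lt hwf hp))
  have := Finset.card_le_card hsub
  rw [List.toFinset_card_of_nodup hnd, Finset.card_range] at this
  omega

def arcTarget? (Q : Quiv) (u i : ℕ) : Option ℕ :=
  Q.arcs[i]?.bind fun a => if a.1 = u then some a.2 else none

def walk (Q : Quiv) (u : ℕ) (p : List ℕ) : Option ℕ :=
  p.foldlM Q.arcTarget? u

theorem isPath_iff_walk_eq_some : Q.IsPath u p v ↔ Q.walk u p = some v := by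
  induction p generalizing u with
  | nil =>
    refine ⟨fun h => by cases h; rfl, fun h => ?_⟩
    cases Option.some.inj h
    exact .nil _
  | cons i p ih =>
    simp [walk, isPath_cons_iff, ih, arcTarget?, Option.bind_eq_some_iff]

instance (Q : Quiv) (u : ℕ) (p : List ℕ) (v : ℕ) : Decidable (Q.IsPath u p v) :=
  decidable_of_iff _ isPath_iff_walk_eq_some.symm

end Quiv

namespace List

variable {α : Type*}

theorem exists_stabilize_of_subset_chain {C : List α} {s : ℕ → List α}
    (hchain : ∀ k, s k ⊆ s (k + 1)) (hC : ∀ k, s k ⊆ C) :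
    ∃ k ≤ C.length, s (k + 1) ⊆ s k := by
  classical
  by_contra! hgrow
  have hcard : ∀ k ≤ C.length + 1, k ≤ (s k).toFinset.card := by
    intro k
    induction k with
    | zero => exact fun _ => Nat.zero_le _
    | succ k ih =>
      intro hk
      have hssub : (s k).toFinset ⊂ (s (k + 1)).toFinset := by
        refine ⟨fun x hx => ?_, fun h => hgrow k (by omega) fun x hx => ?_⟩
        · exact mem_toFinset.2 (hchain k (mem_toFinset.1 hx))
        · exact mem_toFinset.1 (h (mem_toFinset.2 hx))
      have := Finset.card_lt_card hssub
      have := ih (by omega)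
      omega
  have hle : (s (C.length + 1)).toFinset.card ≤ C.length :=
    (Finset.card_le_card fun x hx =>
      mem_toFinset.2 (hC _ (mem_toFinset.1 hx))).trans (toFinset_card_le C)
  have := hcard _ le_rfl
  omega

variable (C : List α) (R : List α → α → Prop) [DecidableRel R]

def saturate : List α :=
  (fun s => C.filter fun x => decide (R s x))^[C.length + 1] []

variable {C R}

theorem saturate_induction {P : α → Prop}
    (h : ∀ s, (∀ y ∈ s, P y) → ∀ x ∈ C, R s x → P x) :
    ∀ x ∈ saturate C R, P x := by
  suffices ∀ k, ∀ x ∈ (fun s => C.filter fun x => decide (R s x))^[k] [], P x from this _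
  intro k
  induction k with
  | zero => simp
  | succ k ih =>
    intro x hx
    rw [Function.iterate_succ_apply', mem_filter, decide_eq_true_iff] at hx
    exact h _ ih x hx.1 hx.2

theorem mem_saturate (hmono : ∀ ⦃s t⦄, s ⊆ t → ∀ ⦃x⦄, R s x → R t x)
    {x : α} (hx : x ∈ C) (hR : R (saturate C R) x) :
    x ∈ saturate C R := by
  set F := fun s => C.filter fun x => decide (R s x)
  have hF : ∀ {s t}, s ⊆ t → F s ⊆ F t := fun hst y hy => by
    simp only [F, mem_filter, decide_eq_true_iff] at hy ⊢
    exact ⟨hy.1, hmono hst hy.2⟩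
  have hchain : ∀ k, F^[k] [] ⊆ F^[k + 1] [] := by
    intro k
    induction k with
    | zero => exact nil_subset _
    | succ k ih => simpa only [Function.iterate_succ_apply'] using hF ih
  have hC : ∀ k, F^[k] [] ⊆ C := by
    rintro (_ | k)
    · exact nil_subset _
    · rw [Function.iterate_succ_apply']
      exact filter_subset_self _
  obtain ⟨k, hk, hstab⟩ := exists_stabilize_of_subset_chain hchain hC
  have hstable : ∀ j, F^[k + j + 1] [] ⊆ F^[k + j] [] := by
    intro j
    induction j with
    | zero => exact hstab
    | succ j ih => simpa only [← add_assoc, Function.iterate_succ_apply'] using hF ih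
  have hfix := hstable (C.length + 1 - k)
  rw [show k + (C.length + 1 - k) = C.length + 1 by omega] at hfix
  apply hfix
  rw [Function.iterate_succ_apply', mem_filter, decide_eq_true_iff]
  exact ⟨hx, hR⟩

end List

def shortLists (m : ℕ) : ℕ → List (List ℕ)
  | 0 => [[]]
  | k + 1 => [] :: (List.range m).flatMap fun i => (shortLists m k).map (i :: ·)

theorem mem_shortLists {m k : ℕ} {p : List ℕ} :
    p ∈ shortLists m k ↔ p.length ≤ k ∧ ∀ i ∈ p, i < m := by
  induction k generalizing p with
  | zero => cases p <;> simp [shortLists]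
  | succ k ih =>
    cases p with
    | nil => simp [shortLists]
    | cons i p => simp [shortLists, ih, and_comm, and_left_comm]

/-- `((u, v), (p, q))` stands for the bipath `(p, q)` from `u` to `v`. -/
abbrev Bipath := (ℕ × ℕ) × List ℕ × List ℕ

namespace Quiv

variable {Q : Quiv} {u v : ℕ} {p q : List ℕ}

def bipaths (Q : Quiv) : List Bipath :=
  let paths := shortLists Q.arcs.length Q.nbVertex
  ((List.range Q.nbVertex ×ˢ List.range Q.nbVertex) ×ˢ (paths ×ˢ paths)).filter
    fun x => Q.IsPath x.1.1 x.2.1 x.1.2 ∧ Q.IsPath x.1.1 x.2.2 x.1.2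

theorem isPath_of_mem_bipaths (h : ((u, v), (p, q)) ∈ Q.bipaths) :
    u < Q.nbVertex ∧ Q.IsPath u p v ∧ Q.IsPath u q v := by
  simp only [bipaths, List.mem_filter, List.mem_product, List.mem_range,
    decide_eq_true_iff] at h
  exact ⟨h.1.1.1, h.2⟩

theorem mem_bipaths (hwf : Q.Wellformed) (hac : Q.Acyclic) (hu : u < Q.nbVertex)
    (hp : Q.IsPath u p v) (hq : Q.IsPath u q v) : ((u, v), (p, q)) ∈ Q.bipaths := by
  simp only [bipaths, List.mem_filter, List.mem_product, List.mem_range, mem_shortLists,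
    decide_eq_true_iff]
  exact ⟨⟨⟨hu, hp.tgt_lt hwf hu⟩, ⟨hp.length_le hwf hac, fun _ => hp.lt_length⟩,
    ⟨hq.length_le hwf hac, fun _ => hq.lt_length⟩⟩, hp, hq⟩

end Quiv

section PathRelSaturation

variable {Q : Quiv} {Qs : List Subquiv} {u v : ℕ} {p q : List ℕ}

instance (S : Subquiv) (Q : Quiv) (u : ℕ) (p : List ℕ) (v : ℕ) :
    Decidable (S.PathIn Q u p v) :=
  inferInstanceAs (Decidable (_ ∧ _))

instance (Q : Quiv) (Qs : List Subquiv) (u v : ℕ) (p q : List ℕ) :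
    Decidable (subBipaths Q Qs u v p q) :=
  inferInstanceAs (Decidable (∃ _ ∈ _, _))

theorem subBipaths_comm : subBipaths Q Qs u v p q ↔ subBipaths Q Qs u v q p := by
  simp only [subBipaths, and_comm]

/-- Only the empty path fails to determine its endpoints. -/
theorem subBipaths_of_isPath (hac : Q.Acyclic) {u' v' : ℕ} (hb : subBipaths Q Qs u' v' p q)
    (hp : Q.IsPath u p v) : p = q ∨ subBipaths Q Qs u v p q := by
  obtain ⟨S, hS, hp', hq'⟩ := hb
  rcases eq_or_ne p [] with rfl | hne
  · cases hp'.1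
    exact Or.inl (hq'.1.eq_nil_of_cycle hac).symm
  · obtain rfl := hp'.1.src_unique hne hp
    obtain rfl := hp'.1.tgt_unique hp
    exact Or.inr ⟨S, hS, hp', hq'⟩

def Bipath.IsTransOrAppend (a b x : Bipath) : Prop :=
  (a.1 = b.1 ∧ a.2.2 = b.2.1 ∧ x = (a.1, a.2.1, b.2.2)) ∨
    (a.1.2 = b.1.1 ∧ x = ((a.1.1, b.1.2), a.2.1 ++ b.2.1, a.2.2 ++ b.2.2))

instance (a b x : Bipath) : Decidable (a.IsTransOrAppend b x) :=
  inferInstanceAs (Decidable (_ ∨ _))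

/-- The rules generating `cl_Q(l)` (reflexivity, the generators, symmetry, transitivity,
concatenation), applied once to the bipaths in `s`. -/
def pathRelStep (Q : Quiv) (Qs : List Subquiv) (s : List Bipath) (x : Bipath) : Prop :=
  x.2.1 = x.2.2 ∨ subBipaths Q Qs x.1.1 x.1.2 x.2.1 x.2.2 ∨ (x.1, x.2.2, x.2.1) ∈ s ∨
    ∃ a ∈ s, ∃ b ∈ s, a.IsTransOrAppend b x

instance (Q : Quiv) (Qs : List Subquiv) : DecidableRel (pathRelStep Q Qs) :=
  fun _ _ => inferInstanceAs (Decidable (_ ∨ _))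

theorem pathRelStep_mono ⦃s t : List Bipath⦄ (hst : s ⊆ t) ⦃x : Bipath⦄
    (h : pathRelStep Q Qs s x) : pathRelStep Q Qs t x := by
  rcases h with h | h | h | ⟨a, ha, b, hb, h⟩
  · exact Or.inl h
  · exact Or.inr (Or.inl h)
  · exact Or.inr (Or.inr (Or.inl (hst h)))
  · exact Or.inr (Or.inr (Or.inr ⟨a, hst ha, b, hst hb, h⟩))

def pathRelSaturation (Q : Quiv) (Qs : List Subquiv) : List Bipath :=
  Q.bipaths.saturate (pathRelStep Q Qs)

theorem pathRelClosure_of_mem_pathRelSaturation {x : Bipath}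
    (hx : x ∈ pathRelSaturation Q Qs) :
    PathRelClosure (subBipaths Q Qs) x.1.1 x.1.2 x.2.1 x.2.2 := by
  refine List.saturate_induction (P := fun x : Bipath =>
    PathRelClosure (subBipaths Q Qs) x.1.1 x.1.2 x.2.1 x.2.2) (fun s hs x _ hx => ?_) x hx
  rcases hx with h | h | h |
    ⟨⟨⟨u, v⟩, p, q⟩, ha, ⟨⟨u', v'⟩, q', r⟩, hb, ⟨h₁, h₂, rfl⟩ | ⟨h₁, rfl⟩⟩
  · exact h ▸ .refl _ _ _
  · exact .base h
  · exact (hs _ h).symm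
  · obtain ⟨rfl, rfl⟩ := Prod.mk.inj h₁
    obtain rfl : q = q' := h₂
    exact (hs _ ha).trans (hs _ hb)
  · obtain rfl : v = u' := h₁
    exact (hs _ ha).comp (hs _ hb)

theorem isPath_of_mem_pathRelSaturation (h : ((u, v), (p, q)) ∈ pathRelSaturation Q Qs) :
    u < Q.nbVertex ∧ Q.IsPath u p v ∧ Q.IsPath u q v :=
  Quiv.isPath_of_mem_bipaths <| List.saturate_induction (P := (· ∈ Q.bipaths))
    (fun _ _ _ hx _ => hx) _ h

theorem mem_pathRelSaturation (hwf : Q.Wellformed) (hac : Q.Acyclic) (hu : u < Q.nbVertex)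
    (hp : Q.IsPath u p v) (hq : Q.IsPath u q v)
    (h : pathRelStep Q Qs (pathRelSaturation Q Qs) ((u, v), (p, q))) :
    ((u, v), (p, q)) ∈ pathRelSaturation Q Qs :=
  List.mem_saturate pathRelStep_mono (Q.mem_bipaths hwf hac hu hp hq) h

theorem mem_pathRelSaturation_of_pathRelClosure (hwf : Q.Wellformed) (hac : Q.Acyclic)
    {u' v' : ℕ} (h : PathRelClosure (subBipaths Q Qs) u' v' p q) (hu : u < Q.nbVertex)
    (hpq : Q.IsPath u p v ∨ Q.IsPath u q v) : ((u, v), (p, q)) ∈ pathRelSaturation Q Qs := by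
  induction h generalizing u v with
  | @base _ _ p q hb =>
    have hgen : p = q ∨ subBipaths Q Qs u v p q := by
      rcases hpq with hp | hq
      · exact subBipaths_of_isPath hac hb hp
      · exact (subBipaths_of_isPath hac (subBipaths_comm.1 hb) hq).imp Eq.symm subBipaths_comm.1
    rcases hgen with rfl | ⟨S, hS, hp, hq⟩
    · exact mem_pathRelSaturation hwf hac hu (hpq.elim id id) (hpq.elim id id) (Or.inl rfl)
    · exact mem_pathRelSaturation hwf hac hu hp.1 hq.1 (Or.inr (Or.inl ⟨S, hS, hp, hq⟩))
  | refl => exact mem_pathRelSaturation hwf hac hu (hpq.elim id id) (hpq.elim id id) (Or.inl rfl)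
  | symm _ ih =>
    have hqp := ih hu hpq.symm
    obtain ⟨-, hq, hp⟩ := isPath_of_mem_pathRelSaturation hqp
    exact mem_pathRelSaturation hwf hac hu hp hq (Or.inr (Or.inr (Or.inl hqp)))
  | @trans _ _ p q r _ _ ih₁ ih₂ =>
    obtain ⟨ha, hb⟩ : ((u, v), (p, q)) ∈ pathRelSaturation Q Qs ∧
        ((u, v), (q, r)) ∈ pathRelSaturation Q Qs := by
      rcases hpq with hp | hr
      · have ha := ih₁ hu (Or.inl hp)
        exact ⟨ha, ih₂ hu (Or.inl (isPath_of_mem_pathRelSaturation ha).2.2)⟩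
      · have hb := ih₂ hu (Or.inr hr)
        exact ⟨ih₁ hu (Or.inr (isPath_of_mem_pathRelSaturation hb).2.1), hb⟩
    exact mem_pathRelSaturation hwf hac hu (isPath_of_mem_pathRelSaturation ha).2.1
      (isPath_of_mem_pathRelSaturation hb).2.2
      (Or.inr (Or.inr (Or.inr ⟨_, ha, _, hb, Or.inl ⟨rfl, rfl, rfl⟩⟩)))
  | @comp _ _ _ p p' q q' _ _ ih₁ ih₂ =>
    obtain ⟨x, ha, hb⟩ : ∃ x, ((u, x), (p, p')) ∈ pathRelSaturation Q Qs ∧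
        ((x, v), (q, q')) ∈ pathRelSaturation Q Qs := by
      rcases hpq with h | h <;> obtain ⟨x, h₁, h₂⟩ := h.exists_of_append
      · exact ⟨x, ih₁ hu (Or.inl h₁), ih₂ (h₁.tgt_lt hwf hu) (Or.inl h₂)⟩
      · exact ⟨x, ih₁ hu (Or.inr h₁), ih₂ (h₁.tgt_lt hwf hu) (Or.inr h₂)⟩
    obtain ⟨-, hp, hp'⟩ := isPath_of_mem_pathRelSaturation ha
    obtain ⟨-, hq, hq'⟩ := isPath_of_mem_pathRelSaturation hb
    exact mem_pathRelSaturation hwf hac hu (hp.append_s13 hq) (hp'.append_s13 hq')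
      (Or.inr (Or.inr (Or.inr ⟨_, ha, _, hb, Or.inr ⟨rfl, rfl⟩⟩)))

theorem bipaths_subset_pathRelSaturation_iff (hwf : Q.Wellformed) (hac : Q.Acyclic) :
    Q.bipaths ⊆ pathRelSaturation Q Qs ↔
      ∀ u v p q, Q.IsPath u p v → Q.IsPath u q v →
        PathRelClosure (subBipaths Q Qs) u v p q := by
  constructor
  · intro hfull u v p q hp hq
    by_cases hu : u < Q.nbVertex
    · exact pathRelClosure_of_mem_pathRelSaturation (hfull (Q.mem_bipaths hwf hac hu hp hq))
    · obtain rfl : p = [] := by_contra fun hne => hu (hp.src_lt hwf hne)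
      obtain rfl : q = [] := by_contra fun hne => hu (hq.src_lt hwf hne)
      exact .refl _ _ _
  · rintro hfull ⟨⟨u, v⟩, p, q⟩ hx
    obtain ⟨hu, hp, hq⟩ := Quiv.isPath_of_mem_bipaths hx
    exact mem_pathRelSaturation_of_pathRelClosure hwf hac (hfull u v p q hp hq) hu (Or.inl hp)

end PathRelSaturation

section Computability

open Primrec

namespace Primrec

variable {α β γ : Type*} [Primcodable α] [Primcodable β] [Primcodable γ]

theorem list_product : Primrec₂ (List.product : List α → List β → List (α × β)) :=
  (list_flatMap fst <| to₂ <| list_map (snd.comp fst) <| to₂ <| pair (snd.comp fst) snd).of_eq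
    fun _ => rfl

theorem list_saturate {C : γ → List α} {R : γ → List α → α → Prop}
    [∀ c, DecidableRel (R c)]
    (hC : Primrec C) (hR : PrimrecPred fun z : γ × List α × α => R z.1 z.2.1 z.2.2) :
    Primrec fun c => (C c).saturate (R c) := by
  have hstep : PrimrecRel fun (x : α) (cs : γ × List α) => R cs.1 cs.2 x :=
    hR.comp (pair (fst.comp snd) (pair (snd.comp snd) fst))
  exact nat_iterate (Primrec.succ.comp (list_length.comp hC)) (const [])
    (hstep.listFilter.comp (hC.comp fst) (pair fst snd))

end Primrec

theorem PrimrecRel.list_mem {α : Type*} [Primcodable α] [DecidableEq α] :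
    PrimrecRel fun (a : α) (l : List α) => a ∈ l :=
  (exists_mem_list Primrec.eq).swap.of_eq fun _ _ => by simp

theorem PrimrecRel.list_subset {α : Type*} [Primcodable α] [DecidableEq α] :
    PrimrecRel fun (l m : List α) => l ⊆ m :=
  (forall_mem_list (list_mem (α := α))).of_eq fun _ _ => Iff.rfl

theorem primrec_shortLists : Primrec₂ shortLists :=
  (nat_rec' snd (const [[]]) <| to₂ <| list_cons.comp (const []) <|
    list_flatMap (list_range.comp (fst.comp fst)) <| to₂ <|
      list_map (snd.comp (snd.comp fst)) <| to₂ <| list_cons.comp (snd.comp fst) snd).of_eq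
    fun z => by
      induction z.2 with
      | zero => rfl
      | succ k ih => simp only [shortLists, ih]

theorem Quiv.primrec_nbVertex : Primrec Quiv.nbVertex := fst.comp of_equiv

theorem Quiv.primrec_arcs : Primrec Quiv.arcs := snd.comp of_equiv

theorem Subquiv.primrec_vertices : Primrec Subquiv.vertices := fst.comp of_equiv

theorem Subquiv.primrec_arcs : Primrec Subquiv.arcs := snd.comp of_equiv

theorem Quiv.primrec_arcTarget? :
    Primrec fun z : Quiv × ℕ × ℕ => z.1.arcTarget? z.2.1 z.2.2 :=
  option_bind (list_getElem?.comp (primrec_arcs.comp fst) (snd.comp snd)) <|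
    Primrec.ite (Primrec.eq.comp (fst.comp snd) (fst.comp (snd.comp fst)))
      (option_some.comp (snd.comp snd)) (const none)

theorem Quiv.primrec_walk : Primrec fun z : Quiv × ℕ × List ℕ => z.1.walk z.2.1 z.2.2 :=
  (list_foldl (snd.comp snd) (option_some.comp (fst.comp snd)) <| to₂ <|
    option_bind (fst.comp snd) <| to₂ <| primrec_arcTarget?.comp <|
      pair (fst.comp (fst.comp fst)) (pair snd (snd.comp (snd.comp fst)))).of_eq
    fun z => (List.foldlM_eq_foldl z.1.arcTarget? z.2.1 z.2.2).symm

theorem Quiv.primrecPred_isPath :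
    PrimrecPred fun z : Quiv × ℕ × List ℕ × ℕ => z.1.IsPath z.2.1 z.2.2.1 z.2.2.2 :=
  (Primrec.eq.comp (primrec_walk.comp (pair fst (pair (fst.comp snd) (fst.comp (snd.comp snd)))))
    (option_some.comp (snd.comp (snd.comp snd)))).of_eq fun _ => isPath_iff_walk_eq_some.symm

theorem Quiv.primrec_bipaths : Primrec Quiv.bipaths := by
  have hrange := list_range.comp primrec_nbVertex
  have hpaths := primrec_shortLists.comp (list_length.comp primrec_arcs) primrec_nbVertex
  have hpath : ∀ {f : Bipath × Quiv → List ℕ}, Primrec f →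
      PrimrecPred fun y : Bipath × Quiv => y.2.IsPath y.1.1.1 (f y) y.1.1.2 := fun hf =>
    primrecPred_isPath.comp <| pair snd <| pair (fst.comp (fst.comp fst)) <|
      pair hf (snd.comp (fst.comp fst))
  exact (PrimrecRel.listFilter (R := fun (x : Bipath) (Q : Quiv) =>
      Q.IsPath x.1.1 x.2.1 x.1.2 ∧ Q.IsPath x.1.1 x.2.2 x.1.2)
    ((hpath (fst.comp (snd.comp fst))).and (hpath (snd.comp (snd.comp fst))))).comp
    (list_product.comp (list_product.comp hrange hrange) (list_product.comp hpaths hpaths))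
    Primrec.id

theorem Subquiv.primrecPred_pathIn :
    PrimrecPred fun z : Subquiv × Quiv × ℕ × List ℕ × ℕ =>
      z.1.PathIn z.2.1 z.2.2.1 z.2.2.2.1 z.2.2.2.2 := by
  have hu : Primrec fun z : Subquiv × Quiv × ℕ × List ℕ × ℕ => z.2.2.1 :=
    fst.comp (snd.comp snd)
  have hp : Primrec fun z : Subquiv × Quiv × ℕ × List ℕ × ℕ => z.2.2.2.1 :=
    fst.comp (snd.comp (snd.comp snd))
  have hv : Primrec fun z : Subquiv × Quiv × ℕ × List ℕ × ℕ => z.2.2.2.2 :=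
    snd.comp (snd.comp (snd.comp snd))
  exact (Quiv.primrecPred_isPath.comp snd).and <|
    (PrimrecRel.list_mem.comp hu (primrec_vertices.comp fst)).and <|
    (PrimrecRel.list_mem.comp hv (primrec_vertices.comp fst)).and <|
    (PrimrecRel.forall_mem_list (R := fun i (z : Subquiv × Quiv × ℕ × List ℕ × ℕ) =>
      i ∈ z.1.arcs) (PrimrecRel.list_mem.comp fst (primrec_arcs.comp (fst.comp snd)))).comp
      hp Primrec.id

theorem primrecPred_subBipaths :
    PrimrecPred fun z : (Quiv × List Subquiv) × Bipath =>
      subBipaths z.1.1 z.1.2 z.2.1.1 z.2.1.2 z.2.2.1 z.2.2.2 := by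
  have hpathIn : ∀ {f : Subquiv × (Quiv × List Subquiv) × Bipath → List ℕ}, Primrec f →
      PrimrecPred fun y : Subquiv × (Quiv × List Subquiv) × Bipath =>
        y.1.PathIn y.2.1.1 y.2.2.1.1 (f y) y.2.2.1.2 := fun hf =>
    Subquiv.primrecPred_pathIn.comp <| pair fst <| pair (fst.comp (fst.comp snd)) <|
      pair (fst.comp (fst.comp (snd.comp snd))) <| pair hf (snd.comp (fst.comp (snd.comp snd)))
  exact (PrimrecRel.exists_mem_list
    (R := fun (S : Subquiv) (z : (Quiv × List Subquiv) × Bipath) =>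
      S.PathIn z.1.1 z.2.1.1 z.2.2.1 z.2.1.2 ∧ S.PathIn z.1.1 z.2.1.1 z.2.2.2 z.2.1.2)
    ((hpathIn (fst.comp (snd.comp (snd.comp snd)))).and
      (hpathIn (snd.comp (snd.comp (snd.comp snd)))))).comp (snd.comp fst) Primrec.id

theorem Bipath.primrecPred_isTransOrAppend :
    PrimrecPred fun y : Bipath × Bipath × Bipath => y.1.IsTransOrAppend y.2.1 y.2.2 := by
  have ha : Primrec fun y : Bipath × Bipath × Bipath => y.1 := fst
  have hb : Primrec fun y : Bipath × Bipath × Bipath => y.2.1 := fst.comp snd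
  have hx : Primrec fun y : Bipath × Bipath × Bipath => y.2.2 := snd.comp snd
  exact ((Primrec.eq.comp (fst.comp ha) (fst.comp hb)).and <|
      (Primrec.eq.comp (snd.comp (snd.comp ha)) (fst.comp (snd.comp hb))).and <|
      Primrec.eq.comp hx <| pair (fst.comp ha) <|
        pair (fst.comp (snd.comp ha)) (snd.comp (snd.comp hb))).or <|
    (Primrec.eq.comp (snd.comp (fst.comp ha)) (fst.comp (fst.comp hb))).and <|
      Primrec.eq.comp hx <| pair (pair (fst.comp (fst.comp ha)) (snd.comp (fst.comp hb))) <|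
        pair (list_append.comp (fst.comp (snd.comp ha)) (fst.comp (snd.comp hb)))
          (list_append.comp (snd.comp (snd.comp ha)) (snd.comp (snd.comp hb)))

theorem primrecPred_pathRelStep :
    PrimrecPred fun z : (Quiv × List Subquiv) × List Bipath × Bipath =>
      pathRelStep z.1.1 z.1.2 z.2.1 z.2.2 := by
  have hs : Primrec fun z : (Quiv × List Subquiv) × List Bipath × Bipath => z.2.1 :=
    fst.comp snd
  have hx : Primrec fun z : (Quiv × List Subquiv) × List Bipath × Bipath => z.2.2 :=
    snd.comp snd
  have hexists := (PrimrecRel.exists_mem_list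
    (R := fun (a : Bipath) (z : (Quiv × List Subquiv) × List Bipath × Bipath) =>
      ∃ b ∈ z.2.1, a.IsTransOrAppend b z.2.2)
    ((PrimrecRel.exists_mem_list
      (R := fun (b : Bipath) (az : Bipath × (Quiv × List Subquiv) × List Bipath × Bipath) =>
        az.1.IsTransOrAppend b az.2.2.2)
      (Bipath.primrecPred_isTransOrAppend.comp <| pair (fst.comp snd) <|
        pair fst (snd.comp (snd.comp (snd.comp snd))))).comp
      (fst.comp (snd.comp snd)) Primrec.id)).comp hs Primrec.id
  exact (Primrec.eq.comp (fst.comp (snd.comp hx)) (snd.comp (snd.comp hx))).or <|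
    (primrecPred_subBipaths.comp (pair fst hx)).or <|
    (PrimrecRel.list_mem.comp (pair (fst.comp hx) (pair (snd.comp (snd.comp hx))
      (fst.comp (snd.comp hx)))) hs).or hexists

theorem primrecRel_bipaths_subset_pathRelSaturation :
    PrimrecRel fun (Q : Quiv) (Qs : List Subquiv) => Q.bipaths ⊆ pathRelSaturation Q Qs :=
  PrimrecRel.list_subset.comp (Quiv.primrec_bipaths.comp fst)
    (list_saturate (Quiv.primrec_bipaths.comp fst) primrecPred_pathRelStep)

end Computability

/-- Decidability of the commerge problem for finite acyclic quivers: there is an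
algorithm (a computable boolean-valued function) which, given a well-formed acyclic
quiver `Q` and a finite list of subquivers of `Q`, returns `true` if and only if the
smallest path relation containing the union of the sets of bipaths of the quivers
induced by the subquivers is full, i.e. relates every pair of paths of `Q` with the
same source and the same target. -/
theorem commerge_decidable :
    ∃ f : Quiv → List Subquiv → Bool, Computable₂ f ∧
      ∀ (Q : Quiv) (Qs : List Subquiv),
        Q.Wellformed → Q.Acyclic → (∀ S ∈ Qs, S.Wf Q) →
        (f Q Qs = true ↔
          ∀ u v p q, Q.IsPath u p v → Q.IsPath u q v →
            PathRelClosure (subBipaths Q Qs) u v p q) :=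
  ⟨fun Q Qs => decide (Q.bipaths ⊆ pathRelSaturation Q Qs),
    primrecRel_bipaths_subset_pathRelSaturation.decide.to_comp,
    fun _ _ hwf hac _ => decide_eq_true_iff.trans (bipaths_subset_pathRelSaturation_iff hwf hac)⟩
end
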